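/- arXiv:2512.06101 — 2 statements merged into one kernel-verified Lean document; each statement's English description precedes it below -/
import Mathlib

section
/- Let ε > 0, λ > 0, and let f : [0,∞) × [0,∞) → [0,∞) be continuous, C¹ in t, with f(·,t) and v ↦ v f(v,t) integrable on (0,∞) for every t, with ∫₀^∞ f(v,t) dv = 1 for all t ≥ 0, and such that t ↦ ∫₀^∞ v f(v,t) dv can be differentiated under the integral sign. If f satisfies the ε-BDY equation pointwise, then d/dt ∫₀^∞ v f(v,t) dv = 0 for all t ≥ 0; i.e. the ε-BDY dynamics conserves the mean wealth. -/
open MeasureTheory Set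

/-!
Multiplying the equation by `v` and integrating, the gain term `f(v+ε)` loses the amount
`ε r` of mean against the loss term `f(v)` on `v ≥ ε`, while the gain term `r f(v-ε)` on
`v ≥ ε` wins back `ε r` times the total mass against the loss term `r f(v)`. Unit mass makes
the two contributions cancel.
-/

lemma integral_Ioi_comp_add_right (g : ℝ → ℝ) (a c : ℝ) :
    ∫ v in Ioi c, g (v + a) = ∫ v in Ioi (c + a), g v := by
  rw [show Ioi c = (· + a) ⁻¹' Ioi (c + a) by simp]
  exact (measurePreserving_add_right volume a).setIntegral_preimage_emb
    (measurableEmbedding_addRight a) g _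

section ShiftIoi

variable {g : ℝ → ℝ} {a c : ℝ}

lemma integrableOn_Ioi_comp_add_right (hg : IntegrableOn g (Ioi (c + a))) :
    IntegrableOn (fun v => g (v + a)) (Ioi c) := by
  rw [show Ioi c = (· + a) ⁻¹' Ioi (c + a) by simp]
  exact ((measurePreserving_add_right volume a).integrableOn_comp_preimage
    (measurableEmbedding_addRight a)).2 hg

lemma integrableOn_Ioi_mul_comp_add_right (hg : IntegrableOn g (Ioi (c + a)))
    (hvg : IntegrableOn (fun w => w * g w) (Ioi (c + a))) :
    IntegrableOn (fun v => v * g (v + a)) (Ioi c) := by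
  refine (integrableOn_Ioi_comp_add_right (hvg.sub (hg.const_mul a))).congr_fun
    (fun v _ => ?_) measurableSet_Ioi
  simp only [Pi.sub_apply]
  ring

lemma integral_Ioi_mul_comp_add_right (hg : IntegrableOn g (Ioi (c + a)))
    (hvg : IntegrableOn (fun w => w * g w) (Ioi (c + a))) :
    ∫ v in Ioi c, v * g (v + a) =
      (∫ w in Ioi (c + a), w * g w) - a * ∫ w in Ioi (c + a), g w := by
  calc ∫ v in Ioi c, v * g (v + a)
      = ∫ v in Ioi c, (fun w => w * g w - a * g w) (v + a) := by
        refine setIntegral_congr_fun measurableSet_Ioi (fun v _ => ?_)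
        simp only
        ring
    _ = ∫ w in Ioi (c + a), (w * g w - a * g w) :=
        integral_Ioi_comp_add_right (fun w => w * g w - a * g w) a c
    _ = _ := by rw [integral_sub hvg (hg.const_mul a), integral_const_mul]

end ShiftIoi

lemma mul_ite_le_eq_indicator (h : ℝ → ℝ) (ε v : ℝ) :
    h v * (if ε ≤ v then 1 else 0) = (Ici ε).indicator h v := by
  by_cases hv : ε ≤ v <;> simp [hv]

lemma integrable_mul_ite_le {h : ℝ → ℝ} {ε : ℝ} (hh : IntegrableOn h (Ioi ε)) :
    Integrable (fun v => h v * (if ε ≤ v then 1 else 0)) := by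
  simp only [mul_ite_le_eq_indicator]
  exact ((integrableOn_Ici_iff_integrableOn_Ioi' (by simp)).2 hh).integrable_indicator
    measurableSet_Ici

lemma setIntegral_Ioi_mul_ite_le {c ε : ℝ} (hcε : c < ε) (h : ℝ → ℝ) :
    ∫ v in Ioi c, h v * (if ε ≤ v then 1 else 0) = ∫ v in Ioi ε, h v := by
  simp only [mul_ite_le_eq_indicator]
  rw [setIntegral_indicator measurableSet_Ici, inter_eq_right.2 (Ici_subset_Ioi.2 hcε),
    integral_Ici_eq_integral_Ioi]

/-- `λ / 2 * bdyOperator ε (f · t) v` is the right-hand side of the ε-BDY equation. -/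
noncomputable def bdyOperator (ε : ℝ) (g : ℝ → ℝ) (v : ℝ) : ℝ :=
  g (v + ε) - (∫ w in Ioi ε, g w) * g v +
    ((∫ w in Ioi ε, g w) * g (v - ε) - g v) * (if ε ≤ v then 1 else 0)

section Mean

variable {ε : ℝ} {g : ℝ → ℝ}

lemma integrableOn_and_integral_Ioi_zero_mul_comp_add_right (hε : 0 ≤ ε)
    (hg : IntegrableOn g (Ioi 0)) (hvg : IntegrableOn (fun v => v * g v) (Ioi 0)) :
    IntegrableOn (fun v => v * g (v + ε)) (Ioi 0) ∧
      ∫ v in Ioi 0, v * g (v + ε) = (∫ w in Ioi ε, w * g w) - ε * ∫ w in Ioi ε, g w := by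
  have hsub : Ioi ε ⊆ Ioi 0 := Ioi_subset_Ioi hε
  have hg' : IntegrableOn g (Ioi (0 + ε)) := (zero_add ε).symm ▸ hg.mono_set hsub
  have hvg' : IntegrableOn (fun w => w * g w) (Ioi (0 + ε)) :=
    (zero_add ε).symm ▸ hvg.mono_set hsub
  refine ⟨integrableOn_Ioi_mul_comp_add_right hg' hvg', ?_⟩
  simpa only [zero_add] using integral_Ioi_mul_comp_add_right hg' hvg'

lemma integrableOn_and_integral_Ioi_mul_comp_sub_right (hg : IntegrableOn g (Ioi 0))
    (hvg : IntegrableOn (fun v => v * g v) (Ioi 0)) :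
    IntegrableOn (fun v => v * g (v - ε)) (Ioi ε) ∧
      ∫ v in Ioi ε, v * g (v - ε) = (∫ w in Ioi 0, w * g w) + ε * ∫ w in Ioi 0, g w := by
  have hg' : IntegrableOn g (Ioi (ε + -ε)) := (add_neg_cancel ε).symm ▸ hg
  have hvg' : IntegrableOn (fun w => w * g w) (Ioi (ε + -ε)) := (add_neg_cancel ε).symm ▸ hvg
  simp only [sub_eq_add_neg]
  refine ⟨integrableOn_Ioi_mul_comp_add_right hg' hvg', ?_⟩
  simpa only [add_neg_cancel, neg_mul, sub_neg_eq_add] using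
    integral_Ioi_mul_comp_add_right hg' hvg'

theorem integral_Ioi_mul_bdyOperator_eq_zero (hε : 0 < ε) (hg : IntegrableOn g (Ioi 0))
    (hvg : IntegrableOn (fun v => v * g v) (Ioi 0)) (hmass : ∫ v in Ioi 0, g v = 1) :
    ∫ v in Ioi 0, v * bdyOperator ε g v = 0 := by
  set r := ∫ w in Ioi ε, g w
  have hvgε : IntegrableOn (fun v => v * g v) (Ioi ε) := hvg.mono_set (Ioi_subset_Ioi hε.le)
  obtain ⟨hgain, hgain_eq⟩ :=
    integrableOn_and_integral_Ioi_zero_mul_comp_add_right hε.le hg hvg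
  obtain ⟨hshift, hshift_eq⟩ :=
    integrableOn_and_integral_Ioi_mul_comp_sub_right (ε := ε) hg hvg
  have hsplit : ∫ v in Ioi 0, v * bdyOperator ε g v =
      ∫ v in Ioi 0, ((v * g (v + ε) - r * (v * g v)) +
        (r * (v * g (v - ε)) - v * g v) * (if ε ≤ v then 1 else 0)) := by
    refine setIntegral_congr_fun measurableSet_Ioi (fun v _ => ?_)
    simp only [bdyOperator]
    ring
  have htrunc : ∫ v in Ioi 0, (r * (v * g (v - ε)) - v * g v) * (if ε ≤ v then 1 else 0) =
      r * (∫ v in Ioi ε, v * g (v - ε)) - ∫ v in Ioi ε, v * g v := by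
    rw [setIntegral_Ioi_mul_ite_le hε, integral_sub (hshift.const_mul r) hvgε,
      integral_const_mul]
  have hmoment : IntegrableOn (fun v => v * g (v + ε) - r * (v * g v)) (Ioi 0) :=
    hgain.sub (hvg.const_mul r)
  have htrunc_int : IntegrableOn
      (fun v => (r * (v * g (v - ε)) - v * g v) * (if ε ≤ v then 1 else 0)) (Ioi 0) :=
    (integrable_mul_ite_le ((hshift.const_mul r).sub hvgε)).integrableOn
  rw [hsplit, integral_add hmoment htrunc_int, integral_sub hgain (hvg.const_mul r),
    integral_const_mul, htrunc, hgain_eq, hshift_eq, hmass]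
  ring

end Mean

theorem epsilon_BDY_mean_conservation_general
    (ε lam : ℝ) (hε : 0 < ε)
    (f ft : ℝ → ℝ → ℝ)
    (hint : ∀ t : ℝ, 0 ≤ t → IntegrableOn (fun v => f v t) (Ioi 0))
    (hint1 : ∀ t : ℝ, 0 ≤ t → IntegrableOn (fun v => v * f v t) (Ioi 0))
    (hmass : ∀ t : ℝ, 0 ≤ t → ∫ v in Ioi (0:ℝ), f v t = 1)
    (hDUI : ∀ t : ℝ, 0 ≤ t →
      HasDerivAt (fun s => ∫ v in Ioi (0:ℝ), v * f v s)
        (∫ v in Ioi (0:ℝ), v * ft v t) t)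
    (hPDE : ∀ v t : ℝ, 0 ≤ v → 0 ≤ t →
      ft v t = lam / 2 *
        (f (v + ε) t - (∫ w in Ioi ε, f w t) * f v t +
          ((∫ w in Ioi ε, f w t) * f (v - ε) t - f v t) * (if ε ≤ v then 1 else 0))) :
    ∀ t : ℝ, 0 ≤ t → deriv (fun s => ∫ v in Ioi (0:ℝ), v * f v s) t = 0 := by
  intro t ht
  have hrate : ∫ v in Ioi (0:ℝ), v * ft v t =
      lam / 2 * ∫ v in Ioi (0:ℝ), v * bdyOperator ε (f · t) v := by
    rw [← integral_const_mul]
    refine setIntegral_congr_fun measurableSet_Ioi (fun v hv => ?_)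
    rw [hPDE v t hv.le ht, bdyOperator]
    ring
  rw [(hDUI t ht).deriv, hrate,
    integral_Ioi_mul_bdyOperator_eq_zero hε (hint t ht) (hint1 t ht) (hmass t ht), mul_zero]

/-- **Mean conservation for the ε-BDY equation.**
If `f` is a nonnegative classical (C¹-in-time) solution of the ε-BDY equation
with unit total mass for all times, `f(·,t)` and `v ↦ v f(v,t)` integrable for every `t`,
and `t ↦ ∫₀^∞ v f(v,t) dv` may be differentiated under the integral sign, then
`d/dt ∫₀^∞ v f(v,t) dv = 0` for all `t ≥ 0`. -/
theorem epsilon_BDY_mean_conservation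
    (ε lam : ℝ) (hε : 0 < ε) (hlam : 0 < lam)
    (f ft : ℝ → ℝ → ℝ)
    (hcont : ContinuousOn (fun p : ℝ × ℝ => f p.1 p.2) (Ici 0 ×ˢ Ici 0))
    (hnonneg : ∀ v t : ℝ, 0 ≤ v → 0 ≤ t → 0 ≤ f v t)
    (hderiv_t : ∀ v t : ℝ, 0 ≤ v → 0 ≤ t → HasDerivAt (fun s => f v s) (ft v t) t)
    (hint : ∀ t : ℝ, 0 ≤ t → IntegrableOn (fun v => f v t) (Ioi 0))
    (hint1 : ∀ t : ℝ, 0 ≤ t → IntegrableOn (fun v => v * f v t) (Ioi 0))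
    (hmass : ∀ t : ℝ, 0 ≤ t → ∫ v in Ioi (0:ℝ), f v t = 1)
    (hDUI : ∀ t : ℝ, 0 ≤ t →
      HasDerivAt (fun s => ∫ v in Ioi (0:ℝ), v * f v s)
        (∫ v in Ioi (0:ℝ), v * ft v t) t)
    (hPDE : ∀ v t : ℝ, 0 ≤ v → 0 ≤ t →
      ft v t = lam / 2 *
        (f (v + ε) t - (∫ w in Ioi ε, f w t) * f v t +
          ((∫ w in Ioi ε, f w t) * f (v - ε) t - f v t) * (if ε ≤ v then 1 else 0))) :
    ∀ t : ℝ, 0 ≤ t → deriv (fun s => ∫ v in Ioi (0:ℝ), v * f v s) t = 0 :=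
  epsilon_BDY_mean_conservation_general ε lam hε f ft hint hint1 hmass hDUI hPDE
end

section
/- Let ε > 0, λ > 0, μ > 0, and let f : [0,∞) × [0,∞) → [0,∞) be continuous, C¹ in t, with f(·,t), v f(·,t), v² f(·,t) integrable on (0,∞) for every t, with ∫₀^∞ f(v,t) dv = 1 and ∫₀^∞ v f(v,t) dv = μ for all t ≥ 0, and such that t ↦ ∫₀^∞ v² f(v,t) dv can be differentiated under the integral sign. If f satisfies the ε-BDY equation pointwise, then for all t ≥ 0: d/dt ∫₀^∞ v² f(v,t) dv = λ ε² r[f](t) + λ ε ( μ r[f](t) − r₁[f](t) ), where r[f](t) = ∫_ε^∞ f(v,t) dv and r₁[f](t) = ∫_ε^∞ v f(v,t) dv. -/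
/-!
Multiplying the equation by `v²` and integrating, the two shifted terms are moved back onto `f`
by the substitutions `w = v + ε` and `w = v - ε`, which turn `v²` into `(w ∓ ε)²`. Expanding these
squares, the second moments `∫ v² f` on `(0,∞)` and on `(ε,∞)` cancel between gain and loss terms,
and only the mass, the mean, `r[f]` and `r₁[f]` survive.
-/

open MeasureTheory Set

theorem setIntegral_Ioi_comp_add_right (g : ℝ → ℝ) (c a : ℝ) :
    ∫ v in Ioi c, g (v + a) = ∫ v in Ioi (c + a), g v := by
  rw [← (measurePreserving_add_right volume a).setIntegral_preimage_emb
    (MeasurableEquiv.addRight a).measurableEmbedding g (Ioi (c + a)), preimage_add_const_Ioi,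
    add_sub_cancel_right]

theorem integrableOn_Ioi_comp_add_right_iff {g : ℝ → ℝ} (c a : ℝ) :
    IntegrableOn (fun v => g (v + a)) (Ioi c) ↔ IntegrableOn g (Ioi (c + a)) := by
  rw [← (measurePreserving_add_right volume a).integrableOn_comp_preimage
    (MeasurableEquiv.addRight a).measurableEmbedding (f := g), preimage_add_const_Ioi,
    add_sub_cancel_right]
  rfl

section Moments

variable {μ : Measure ℝ} {g : ℝ → ℝ}

theorem Integrable.sub_sq_mul (a : ℝ) (h0 : Integrable g μ) (h1 : Integrable (fun w => w * g w) μ)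
    (h2 : Integrable (fun w => w ^ 2 * g w) μ) :
    Integrable (fun w => (w - a) ^ 2 * g w) μ := by
  refine ((h2.sub (h1.const_mul (2 * a))).add (h0.const_mul (a ^ 2))).congr
    (ae_of_all _ fun w => ?_)
  simp only [Pi.add_apply, Pi.sub_apply]
  ring

theorem integral_sub_sq_mul (a : ℝ) (h0 : Integrable g μ) (h1 : Integrable (fun w => w * g w) μ)
    (h2 : Integrable (fun w => w ^ 2 * g w) μ) :
    ∫ w, (w - a) ^ 2 * g w ∂μ =
      ∫ w, w ^ 2 * g w ∂μ - 2 * a * ∫ w, w * g w ∂μ + a ^ 2 * ∫ w, g w ∂μ := by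
  have h1' : Integrable (fun w => 2 * a * (w * g w)) μ := h1.const_mul _
  have h21 : Integrable (fun w => w ^ 2 * g w - 2 * a * (w * g w)) μ := h2.sub h1'
  calc ∫ w, (w - a) ^ 2 * g w ∂μ
      = ∫ w, (w ^ 2 * g w - 2 * a * (w * g w)) + a ^ 2 * g w ∂μ := by
        congr 1
        funext w
        ring
    _ = _ := by
        rw [integral_add h21 (h0.const_mul _), integral_sub h2 h1', integral_const_mul,
          integral_const_mul]

end Moments

section SecondMoment

variable {g : ℝ → ℝ} {c a : ℝ} (h0 : IntegrableOn g (Ioi (c + a)))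
  (h1 : IntegrableOn (fun w => w * g w) (Ioi (c + a)))
  (h2 : IntegrableOn (fun w => w ^ 2 * g w) (Ioi (c + a)))
include h0 h1 h2

theorem integrableOn_Ioi_sq_mul_comp_add_right :
    IntegrableOn (fun v => v ^ 2 * g (v + a)) (Ioi c) := by
  simpa using (integrableOn_Ioi_comp_add_right_iff c a).2 (Integrable.sub_sq_mul a h0 h1 h2)

theorem setIntegral_Ioi_sq_mul_comp_add_right :
    ∫ v in Ioi c, v ^ 2 * g (v + a) =
      (∫ w in Ioi (c + a), w ^ 2 * g w) - 2 * a * (∫ w in Ioi (c + a), w * g w)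
        + a ^ 2 * ∫ w in Ioi (c + a), g w := by
  rw [← integral_sub_sq_mul a h0 h1 h2, ← setIntegral_Ioi_comp_add_right]
  simp

end SecondMoment

theorem setIntegral_Ioi_indicator_Ici {ε : ℝ} (hε : 0 < ε) (h : ℝ → ℝ) :
    ∫ v in Ioi 0, (Ici ε).indicator h v = ∫ v in Ioi ε, h v := by
  rw [setIntegral_indicator measurableSet_Ici,
    inter_eq_self_of_subset_right (Ici_subset_Ioi.2 hε), integral_Ici_eq_integral_Ioi]

theorem setIntegral_Ioi_sq_mul_bdyOperator {ε : ℝ} (hε : 0 < ε) {g : ℝ → ℝ}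
    (h0 : IntegrableOn g (Ioi 0)) (h1 : IntegrableOn (fun v => v * g v) (Ioi 0))
    (h2 : IntegrableOn (fun v => v ^ 2 * g v) (Ioi 0)) :
    ∫ v in Ioi 0, v ^ 2 * bdyOperator ε g v =
      ε ^ 2 * (∫ v in Ioi ε, g v) * (1 + ∫ v in Ioi 0, g v)
        + 2 * ε * ((∫ v in Ioi 0, v * g v) * (∫ v in Ioi ε, g v) - ∫ v in Ioi ε, v * g v) := by
  set r := ∫ v in Ioi ε, g v
  have hsub : Ioi ε ⊆ Ioi 0 := Ioi_subset_Ioi hε.le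
  have h0ε := h0.mono_set hsub
  have h1ε := h1.mono_set hsub
  have h2ε := h2.mono_set hsub
  have hup := integrableOn_Ioi_sq_mul_comp_add_right (g := g) (c := 0) (a := ε)
  have hup_eq := setIntegral_Ioi_sq_mul_comp_add_right (g := g) (c := 0) (a := ε)
  have hdown := integrableOn_Ioi_sq_mul_comp_add_right (g := g) (c := ε) (a := -ε)
  have hdown_eq := setIntegral_Ioi_sq_mul_comp_add_right (g := g) (c := ε) (a := -ε)
  simp only [zero_add] at hup hup_eq
  simp only [add_neg_cancel, ← sub_eq_add_neg] at hdown hdown_eq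
  have hbulk : IntegrableOn (fun v => v ^ 2 * g (v + ε) - r * (v ^ 2 * g v)) (Ioi 0) :=
    (hup h0ε h1ε h2ε).sub (h2.const_mul r)
  set tail := fun v => r * (v ^ 2 * g (v - ε)) - v ^ 2 * g v
  have htail : IntegrableOn tail (Ioi ε) := ((hdown h0 h1 h2).const_mul r).sub h2ε
  have htail_ind : IntegrableOn ((Ici ε).indicator tail) (Ioi 0) :=
    ((Iff.mpr integrableOn_Ici_iff_integrableOn_Ioi htail).integrable_indicator
      measurableSet_Ici).integrableOn
  have hsplit : ∀ v, v ^ 2 * bdyOperator ε g v =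
      (v ^ 2 * g (v + ε) - r * (v ^ 2 * g v)) + (Ici ε).indicator tail v := by
    intro v
    by_cases hv : ε ≤ v
    · simp only [bdyOperator, hv, if_true, mul_one, indicator_of_mem (mem_Ici.2 hv), r, tail]
      ring
    · simp only [bdyOperator, hv, if_false, mul_zero, add_zero,
        indicator_of_notMem (mt mem_Ici.1 hv), r, tail]
      ring
  simp only [hsplit]
  rw [integral_add hbulk htail_ind, integral_sub (hup h0ε h1ε h2ε) (h2.const_mul r),
    setIntegral_Ioi_indicator_Ici hε, integral_sub ((hdown h0 h1 h2).const_mul r) h2ε,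
    integral_const_mul, integral_const_mul, hup_eq h0ε h1ε h2ε, hdown_eq h0 h1 h2]
  ring

theorem epsilon_BDY_second_moment_general
    (ε lam μ : ℝ) (hε : 0 < ε)
    (f ft : ℝ → ℝ → ℝ)
    (hint : ∀ t : ℝ, 0 ≤ t → IntegrableOn (fun v => f v t) (Ioi 0))
    (hint1 : ∀ t : ℝ, 0 ≤ t → IntegrableOn (fun v => v * f v t) (Ioi 0))
    (hint2 : ∀ t : ℝ, 0 ≤ t → IntegrableOn (fun v => v ^ 2 * f v t) (Ioi 0))
    (hmass : ∀ t : ℝ, 0 ≤ t → ∫ v in Ioi (0:ℝ), f v t = 1)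
    (hmean : ∀ t : ℝ, 0 ≤ t → ∫ v in Ioi (0:ℝ), v * f v t = μ)
    (hDUI : ∀ t : ℝ, 0 ≤ t →
      HasDerivAt (fun s => ∫ v in Ioi (0:ℝ), v ^ 2 * f v s)
        (∫ v in Ioi (0:ℝ), v ^ 2 * ft v t) t)
    (hPDE : ∀ v t : ℝ, 0 ≤ v → 0 ≤ t →
      ft v t = lam / 2 *
        (f (v + ε) t - (∫ w in Ioi ε, f w t) * f v t +
          ((∫ w in Ioi ε, f w t) * f (v - ε) t - f v t) * (if ε ≤ v then 1 else 0))) :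
    ∀ t : ℝ, 0 ≤ t →
      deriv (fun s => ∫ v in Ioi (0:ℝ), v ^ 2 * f v s) t
        = lam * ε ^ 2 * (∫ w in Ioi ε, f w t)
          + lam * ε * (μ * (∫ w in Ioi ε, f w t) - ∫ w in Ioi ε, w * f w t) := by
  intro t ht
  have hmoment : ∫ v in Ioi 0, v ^ 2 * ft v t =
      lam / 2 * ∫ v in Ioi 0, v ^ 2 * bdyOperator ε (fun w => f w t) v := by
    rw [← integral_const_mul]
    refine setIntegral_congr_fun measurableSet_Ioi fun v hv => ?_
    rw [hPDE v t (le_of_lt hv) ht, bdyOperator]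
    ring
  rw [(hDUI t ht).deriv, hmoment,
    setIntegral_Ioi_sq_mul_bdyOperator hε (hint t ht) (hint1 t ht) (hint2 t ht), hmass t ht, hmean t ht]
  ring

/-- **Evolution of the second moment for the ε-BDY equation.**
If `f` is a nonnegative classical (C¹-in-time) solution of the ε-BDY equation which is,
for every time, a probability density with mean `μ`, whose moments up to order two are
finite, and if `t ↦ ∫₀^∞ v² f(v,t) dv` may be differentiated under the integral sign, then
`d/dt ∫₀^∞ v² f(v,t) dv = λ ε² r[f](t) + λ ε ( μ r[f](t) − r₁[f](t) )` for all `t ≥ 0`,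
where `r[f](t) = ∫_ε^∞ f(v,t) dv` and `r₁[f](t) = ∫_ε^∞ v f(v,t) dv`. -/
theorem epsilon_BDY_second_moment
    (ε lam μ : ℝ) (hε : 0 < ε) (hlam : 0 < lam) (hμ : 0 < μ)
    (f ft : ℝ → ℝ → ℝ)
    (hcont : ContinuousOn (fun p : ℝ × ℝ => f p.1 p.2) (Ici 0 ×ˢ Ici 0))
    (hnonneg : ∀ v t : ℝ, 0 ≤ v → 0 ≤ t → 0 ≤ f v t)
    (hderiv_t : ∀ v t : ℝ, 0 ≤ v → 0 ≤ t → HasDerivAt (fun s => f v s) (ft v t) t)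
    (hint : ∀ t : ℝ, 0 ≤ t → IntegrableOn (fun v => f v t) (Ioi 0))
    (hint1 : ∀ t : ℝ, 0 ≤ t → IntegrableOn (fun v => v * f v t) (Ioi 0))
    (hint2 : ∀ t : ℝ, 0 ≤ t → IntegrableOn (fun v => v ^ 2 * f v t) (Ioi 0))
    (hmass : ∀ t : ℝ, 0 ≤ t → ∫ v in Ioi (0:ℝ), f v t = 1)
    (hmean : ∀ t : ℝ, 0 ≤ t → ∫ v in Ioi (0:ℝ), v * f v t = μ)
    (hDUI : ∀ t : ℝ, 0 ≤ t →
      HasDerivAt (fun s => ∫ v in Ioi (0:ℝ), v ^ 2 * f v s)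
        (∫ v in Ioi (0:ℝ), v ^ 2 * ft v t) t)
    (hPDE : ∀ v t : ℝ, 0 ≤ v → 0 ≤ t →
      ft v t = lam / 2 *
        (f (v + ε) t - (∫ w in Ioi ε, f w t) * f v t +
          ((∫ w in Ioi ε, f w t) * f (v - ε) t - f v t) * (if ε ≤ v then 1 else 0))) :
    ∀ t : ℝ, 0 ≤ t →
      deriv (fun s => ∫ v in Ioi (0:ℝ), v ^ 2 * f v s) t
        = lam * ε ^ 2 * (∫ w in Ioi ε, f w t)
          + lam * ε * (μ * (∫ w in Ioi ε, f w t) - ∫ w in Ioi ε, w * f w t) :=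
  epsilon_BDY_second_moment_general ε lam μ hε f ft hint hint1 hint2 hmass hmean hDUI hPDE
end
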